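/- In the free associative algebra K⟨x,y⟩ with degree-lexicographic order (x > y), the set {x² − xy} ∪ {xyⁱ − xy^{i−1}x : i ≥ 2} is a Gröbner basis of the two-sided ideal generated by x² − xy. -/

import Mathlib

noncomputable section

open MonoidAlgebra

/-- The free associative algebra `K⟨x,y⟩`, realized as the monoid algebra of
the free monoid on two generators (`0 ↔ x`, `1 ↔ y`). -/
abbrev FreeAlg2 (K : Type*) [Field K] := MonoidAlgebra K (FreeMonoid (Fin 2))

/-- Degree-lexicographic order on words with `x > y` (`x = 0`, `y = 1`):
compare lengths first, then lexicographically with the larger letter `x`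
coming first. -/
def WordLt2 (a b : FreeMonoid (Fin 2)) : Prop :=
  a.length < b.length ∨
    (a.length = b.length ∧ List.Lex (fun i j : Fin 2 => j < i) a.toList b.toList)

/-- `w` is the leading word of a noncommutative polynomial `f`. -/
def IsLeadingWord {K : Type*} [Field K] (f : FreeAlg2 K)
    (w : FreeMonoid (Fin 2)) : Prop :=
  w ∈ f.coeff.support ∧ ∀ w' ∈ f.coeff.support, w' = w ∨ WordLt2 w' w

/-- The two-sided ideal generated by a set `S`, as the `K`-span of all
products `a * s * b` with `s ∈ S`. -/
def twoSidedSpan (K : Type*) [Field K] (S : Set (FreeAlg2 K)) :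
    Submodule K (FreeAlg2 K) :=
  Submodule.span K {p | ∃ a s b, s ∈ S ∧ p = a * s * b}

namespace Stmt10Aux

/-! ### Order lemmas -/

abbrev r2 : Fin 2 → Fin 2 → Prop := fun i j => j < i

instance : IsTrichotomous (Fin 2) r2 := ⟨by decide⟩
instance : IsTrans (Fin 2) r2 := ⟨by decide⟩
instance : IsIrrefl (Fin 2) r2 := ⟨by decide⟩
instance : IsAsymm (Fin 2) r2 := ⟨by decide⟩
instance : IsStrictTotalOrder (Fin 2) r2 := {}

lemma lex_trans {a b c : List (Fin 2)} (h1 : List.Lex r2 a b) (h2 : List.Lex r2 b c) :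
    List.Lex r2 a c := List.lex_trans (fun h1 h2 => lt_trans h2 h1) h1 h2

lemma lex_irrefl (a : List (Fin 2)) : ¬ List.Lex r2 a a := irrefl a

lemma wlt_trans {a b c : FreeMonoid (Fin 2)} (h1 : WordLt2 a b) (h2 : WordLt2 b c) :
    WordLt2 a c := by
  rcases h1 with h1 | ⟨e1, l1⟩ <;> rcases h2 with h2 | ⟨e2, l2⟩
  · exact Or.inl (h1.trans h2)
  · exact Or.inl (e2 ▸ h1)
  · exact Or.inl (e1 ▸ h2)
  · exact Or.inr ⟨e1.trans e2, lex_trans l1 l2⟩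

lemma wlt_irrefl (a : FreeMonoid (Fin 2)) : ¬ WordLt2 a a := by
  rintro (h | ⟨-, h⟩)
  · exact lt_irrefl _ h
  · exact lex_irrefl _ h

lemma wlt_trichot (a b : FreeMonoid (Fin 2)) : WordLt2 a b ∨ a = b ∨ WordLt2 b a := by
  rcases lt_trichotomy a.length b.length with h | h | h
  · exact Or.inl (Or.inl h)
  · rcases trichotomous_of (List.Lex r2) a.toList b.toList with hl | hl | hl
    · exact Or.inl (Or.inr ⟨h, hl⟩)
    · exact Or.inr (Or.inl (FreeMonoid.toList.injective hl))
    · exact Or.inr (Or.inr (Or.inr ⟨h.symm, hl⟩))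
  · exact Or.inr (Or.inr (Or.inl h))

lemma exists_max (s : Finset (FreeMonoid (Fin 2))) (hs : s.Nonempty) :
    ∃ m ∈ s, ∀ a ∈ s, a = m ∨ WordLt2 a m := by
  classical
  induction s using Finset.induction_on with
  | empty => exact absurd hs (by simp)
  | @insert a s ha ih =>
    rcases s.eq_empty_or_nonempty with rfl | hne
    · exact ⟨a, by simp, by simp⟩
    · obtain ⟨m, hm, hmax⟩ := ih hne
      rcases wlt_trichot a m with h1 | heq | h1
      · refine ⟨m, Finset.mem_insert_of_mem hm, ?_⟩
        intro b hb
        rcases Finset.mem_insert.1 hb with rfl | hb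
        · exact Or.inr h1
        · exact hmax b hb
      · refine ⟨a, Finset.mem_insert_self a s, ?_⟩
        intro b hb
        rcases Finset.mem_insert.1 hb with rfl | hb
        · exact Or.inl rfl
        · rcases hmax b hb with rfl | hb'
          · exact Or.inl heq.symm
          · exact Or.inr (heq ▸ hb')
      · refine ⟨a, Finset.mem_insert_self a s, ?_⟩
        intro b hb
        rcases Finset.mem_insert.1 hb with rfl | hb
        · exact Or.inl rfl
        · rcases hmax b hb with rfl | hb'
          · exact Or.inr h1
          · exact Or.inr (wlt_trans hb' h1)

/-! ### The normal form map on words -/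

lemma fin2_cases (c : Fin 2) : c = 0 ∨ c = 1 := by omega

def nf : List (Fin 2) → List (Fin 2)
  | [] => []
  | c :: t => if c = 0 then 0 :: List.replicate t.length 1 else c :: nf t

@[simp] lemma nf_nil : nf [] = [] := rfl
lemma nf_cons_zero (t : List (Fin 2)) : nf (0 :: t) = 0 :: List.replicate t.length 1 := by
  simp [nf]
lemma nf_cons_one (t : List (Fin 2)) : nf (1 :: t) = 1 :: nf t := by
  simp [nf]

lemma nf_length : ∀ l : List (Fin 2), (nf l).length = l.length
  | [] => rfl
  | c :: t => by
    rcases fin2_cases c with rfl | rfl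
    · simp [nf_cons_zero]
    · simp [nf_cons_one, nf_length t]

lemma nf_key : ∀ (u : List (Fin 2)) (c : Fin 2) (v : List (Fin 2)),
    nf (u ++ 0 :: c :: v) = nf (u ++ 0 :: 1 :: v)
  | [], c, v => by simp [nf_cons_zero]
  | d :: u, c, v => by
    rcases fin2_cases d with rfl | rfl
    · simp [nf_cons_zero]
    · simp only [List.cons_append, nf_cons_one]
      rw [nf_key u c v]

lemma rep_le (t : List (Fin 2)) :
    List.replicate t.length 1 = t ∨ List.Lex r2 (List.replicate t.length 1) t := by
  induction t with
  | nil => exact Or.inl rfl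
  | cons c t ih =>
    rcases fin2_cases c with rfl | rfl
    · exact Or.inr (by simpa [List.replicate_succ] using List.Lex.rel (by decide : r2 (1:Fin 2) 0))
    · rcases ih with h | h
      · exact Or.inl (by simp [List.replicate_succ, h])
      · exact Or.inr (by simpa [List.replicate_succ] using List.Lex.cons h)

lemma nf_le (l : List (Fin 2)) : nf l = l ∨ List.Lex r2 (nf l) l := by
  induction l with
  | nil => exact Or.inl rfl
  | cons c t ih =>
    rcases fin2_cases c with rfl | rfl
    · rcases rep_le t with h | h
      · exact Or.inl (by simp [nf_cons_zero, h])
      · exact Or.inr (by simpa [nf_cons_zero] using List.Lex.cons h)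
    · rcases ih with h | h
      · exact Or.inl (by simp [nf_cons_one, h])
      · exact Or.inr (by simpa [nf_cons_one] using List.Lex.cons h)

lemma ones_of_not_mem : ∀ t : List (Fin 2), (0 : Fin 2) ∉ t → t = List.replicate t.length 1
  | [], _ => rfl
  | c :: t, h => by
    rcases fin2_cases c with rfl | rfl
    · simp at h
    · have ht : (0 : Fin 2) ∉ t := fun h' => h (List.mem_cons_of_mem _ h')
      simp [List.replicate_succ, ← ones_of_not_mem t ht]

lemma decomp_of_mem : ∀ t : List (Fin 2), (0 : Fin 2) ∈ t →
    ∃ b t₂, t = List.replicate b 1 ++ 0 :: t₂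
  | [], h => by simp at h
  | c :: t, h => by
    rcases fin2_cases c with rfl | rfl
    · exact ⟨0, t, rfl⟩
    · have ht : (0 : Fin 2) ∈ t := by
        rcases List.mem_cons.1 h with h' | h'
        · exact absurd h'.symm (by decide)
        · exact h'
      obtain ⟨b, t₂, rfl⟩ := decomp_of_mem t ht
      exact ⟨b + 1, t₂, by simp [List.replicate_succ]⟩

lemma nf_fix_or_split (l : List (Fin 2)) :
    nf l = l ∨ ∃ u k v, l = u ++ (0 :: (List.replicate k 1 ++ 0 :: v)) := by
  induction l with
  | nil => exact Or.inl rfl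
  | cons c t ih =>
    rcases fin2_cases c with rfl | rfl
    · by_cases h0 : (0 : Fin 2) ∈ t
      · obtain ⟨b, t₂, rfl⟩ := decomp_of_mem t h0
        exact Or.inr ⟨[], b, t₂, rfl⟩
      · exact Or.inl (by rw [nf_cons_zero, ← ones_of_not_mem t h0])
    · rcases ih with h | ⟨u, k, v, rfl⟩
      · exact Or.inl (by rw [nf_cons_one, h])
      · exact Or.inr ⟨1 :: u, k, v, rfl⟩

/-! ### Words in the free monoid -/

lemma toList_of_pow (c : Fin 2) (n : ℕ) :
    FreeMonoid.toList (FreeMonoid.of c ^ n) = List.replicate n c := by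
  induction n with
  | zero => rfl
  | succ n ih =>
    rw [pow_succ, FreeMonoid.toList_mul, ih, FreeMonoid.toList_of, ← List.replicate_succ']

lemma length_eq (w : FreeMonoid (Fin 2)) : w.length = w.toList.length := rfl

def nfW : FreeMonoid (Fin 2) → FreeMonoid (Fin 2) :=
  fun w => FreeMonoid.ofList (nf w.toList)

lemma nfW_le (w : FreeMonoid (Fin 2)) : nfW w = w ∨ WordLt2 (nfW w) w := by
  rcases nf_le w.toList with h | h
  · exact Or.inl (by rw [nfW, h, FreeMonoid.ofList_toList])
  · refine Or.inr (Or.inr ⟨?_, ?_⟩)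
    · rw [length_eq, length_eq, nfW, FreeMonoid.toList_ofList, nf_length]
    · rw [nfW, FreeMonoid.toList_ofList]
      exact h

/-! ### The algebra -/

variable (K : Type*) [Field K]

def X : FreeAlg2 K := MonoidAlgebra.of K (FreeMonoid (Fin 2)) (FreeMonoid.of 0)
def Y : FreeAlg2 K := MonoidAlgebra.of K (FreeMonoid (Fin 2)) (FreeMonoid.of 1)
def S : FreeAlg2 K := X K ^ 2 - X K * Y K
def Idl : Submodule K (FreeAlg2 K) := twoSidedSpan K {S K}

def piK : FreeAlg2 K →ₗ[K] FreeAlg2 K := MonoidAlgebra.mapDomainLinearMap K K nfW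

lemma piK_single (w : FreeMonoid (Fin 2)) (c : K) :
    piK K (MonoidAlgebra.single w c) = MonoidAlgebra.single (nfW w) c :=
  MonoidAlgebra.mapDomain_single

lemma pi_cross (a b : FreeAlg2 K) :
    piK K (a * X K * X K * b) = piK K (a * X K * Y K * b) := by
  induction a using MonoidAlgebra.induction_linear with
  | zero => simp
  | add f g hf hg => simp only [add_mul, map_add, hf, hg]
  | single u c =>
    induction b using MonoidAlgebra.induction_linear with
    | zero => simp
    | add f g hf hg => simp only [mul_add, map_add, hf, hg]
    | single v d =>
      have e1 : (MonoidAlgebra.single u c : FreeAlg2 K) * X K * X K * MonoidAlgebra.single v d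
          = MonoidAlgebra.single (u * FreeMonoid.of 0 * FreeMonoid.of 0 * v) (c * d) := by
        rw [X, MonoidAlgebra.of_apply, MonoidAlgebra.single_mul_single,
          MonoidAlgebra.single_mul_single, MonoidAlgebra.single_mul_single, mul_one, mul_one]
      have e2 : (MonoidAlgebra.single u c : FreeAlg2 K) * X K * Y K * MonoidAlgebra.single v d
          = MonoidAlgebra.single (u * FreeMonoid.of 0 * FreeMonoid.of 1 * v) (c * d) := by
        rw [X, Y, MonoidAlgebra.of_apply, MonoidAlgebra.of_apply, MonoidAlgebra.single_mul_single,
          MonoidAlgebra.single_mul_single, MonoidAlgebra.single_mul_single, mul_one, mul_one]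
      rw [e1, e2, piK_single, piK_single]
      congr 1
      unfold nfW
      have h1 : (u * FreeMonoid.of 0 * FreeMonoid.of 0 * v).toList
          = u.toList ++ 0 :: 0 :: v.toList := by
        simp [FreeMonoid.toList_mul, FreeMonoid.toList_of]
      have h2 : (u * FreeMonoid.of 0 * FreeMonoid.of 1 * v).toList
          = u.toList ++ 0 :: 1 :: v.toList := by
        simp [FreeMonoid.toList_mul, FreeMonoid.toList_of]
      rw [h1, h2, nf_key]

lemma Idl_le_ker : Idl K ≤ LinearMap.ker (piK K) := by
  rw [Idl, twoSidedSpan, Submodule.span_le]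
  rintro p ⟨a, s, b, hs, rfl⟩
  rcases Set.mem_singleton_iff.1 hs with rfl
  have : a * S K * b = a * X K * X K * b - a * X K * Y K * b := by
    rw [S]; noncomm_ring
  simp only [LinearMap.mem_ker, SetLike.mem_coe, this, map_sub, pi_cross, sub_self]

lemma mem_mul_left {p : FreeAlg2 K} (a : FreeAlg2 K) (hp : p ∈ Idl K) :
    a * p ∈ Idl K := by
  induction hp using Submodule.span_induction with
  | mem q hq =>
    obtain ⟨a', s, b, hs, rfl⟩ := hq
    exact Submodule.subset_span ⟨a * a', s, b, hs, by noncomm_ring⟩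
  | zero => simp only [mul_zero]; exact (Idl K).zero_mem
  | add q r _ _ hq hr => rw [mul_add]; exact add_mem hq hr
  | smul c q _ hq => rw [mul_smul_comm]; exact Submodule.smul_mem _ _ hq

lemma mem_mul_right {p : FreeAlg2 K} (b : FreeAlg2 K) (hp : p ∈ Idl K) :
    p * b ∈ Idl K := by
  induction hp using Submodule.span_induction with
  | mem q hq =>
    obtain ⟨a', s, b', hs, rfl⟩ := hq
    exact Submodule.subset_span ⟨a', s, b' * b, hs, by noncomm_ring⟩
  | zero => simp only [zero_mul]; exact (Idl K).zero_mem
  | add q r _ _ hq hr => rw [add_mul]; exact add_mem hq hr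
  | smul c q _ hq => rw [smul_mul_assoc]; exact Submodule.smul_mem _ _ hq

lemma gpoly_mem : ∀ i : ℕ, 1 ≤ i →
    X K * Y K ^ i - X K * Y K ^ (i - 1) * X K ∈ Idl K := by
  intro i hi
  induction i, hi using Nat.le_induction with
  | base =>
    have : X K * Y K ^ 1 - X K * Y K ^ 0 * X K = -(1 * S K * 1) := by
      rw [S]; noncomm_ring
    rw [this]
    exact neg_mem (Submodule.subset_span ⟨1, S K, 1, rfl, rfl⟩)
  | succ i hi ih =>
    have key : X K * Y K ^ (i + 1) - X K * Y K ^ (i + 1 - 1) * X K =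
        (X K * Y K ^ i - X K * Y K ^ (i - 1) * X K) * Y K
          - X K * Y K ^ (i - 1) * S K * 1
          - (X K * Y K ^ i - X K * Y K ^ (i - 1) * X K) * X K := by
      obtain ⟨j, rfl⟩ := Nat.exists_eq_add_of_le hi
      simp only [Nat.add_sub_cancel_left, Nat.add_sub_cancel, S]
      have p1 : (Y K) ^ (1 + j) = Y K ^ j * Y K := by
        rw [add_comm, pow_succ]
      have p2 : (Y K) ^ (1 + j + 1) = Y K ^ j * Y K * Y K := by
        rw [show 1 + j + 1 = (j + 1) + 1 from by omega, pow_succ, add_comm j 1, p1]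
      rw [p2, p1]
      noncomm_ring
    rw [key]
    exact sub_mem (sub_mem (mem_mul_right K _ ih)
      (Submodule.subset_span ⟨X K * Y K ^ (i-1), S K, 1, rfl, rfl⟩))
      (mem_mul_right K _ ih)

/-! ### Leading words of the generators -/

variable {K}

lemma leading_pair (w1 w2 : FreeMonoid (Fin 2)) (hne : w1 ≠ w2) (hlt : WordLt2 w2 w1)
    (c1 c2 : K) (h1 : c1 ≠ 0) (h2 : c2 ≠ 0) :
    IsLeadingWord (MonoidAlgebra.single w1 c1 + MonoidAlgebra.single w2 c2) w1 := by
  classical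
  have hsupp : (MonoidAlgebra.single w1 c1 + MonoidAlgebra.single w2 c2).coeff.support
      = {w1, w2} := by
    show (Finsupp.single w1 c1 + Finsupp.single w2 c2).support = {w1, w2}
    rw [Finsupp.support_add_eq, Finsupp.support_single_ne_zero _ h1,
      Finsupp.support_single_ne_zero _ h2]
    · rfl
    · rw [Finsupp.support_single_ne_zero _ h1, Finsupp.support_single_ne_zero _ h2]
      simpa using hne
  constructor
  · rw [hsupp]; exact Finset.mem_insert_self _ _
  · intro w' hw'
    rw [hsupp] at hw'
    rcases Finset.mem_insert.1 hw' with rfl | hw'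
    · exact Or.inl rfl
    · rcases Finset.mem_singleton.1 hw' with rfl
      exact Or.inr hlt

variable (K)

lemma X_pow_sub : (X K : FreeAlg2 K) ^ 2 - X K * Y K =
    MonoidAlgebra.single (FreeMonoid.of 0 * FreeMonoid.of (0 : Fin 2)) (1 : K)
      + MonoidAlgebra.single (FreeMonoid.of 0 * FreeMonoid.of (1 : Fin 2)) (-1 : K) := by
  rw [X, Y, pow_two, MonoidAlgebra.of_apply, MonoidAlgebra.of_apply,
    MonoidAlgebra.single_mul_single, MonoidAlgebra.single_mul_single, mul_one,
    sub_eq_add_neg, ← MonoidAlgebra.single_neg]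

lemma lead_S : IsLeadingWord ((X K : FreeAlg2 K) ^ 2 - X K * Y K)
    (FreeMonoid.of 0 * FreeMonoid.of 0) := by
  rw [X_pow_sub]
  apply leading_pair
  · intro h
    have := congrArg FreeMonoid.toList h
    simp [FreeMonoid.toList_mul, FreeMonoid.toList_of] at this
  · refine Or.inr ⟨rfl, ?_⟩
    have h1 : (FreeMonoid.of 0 * FreeMonoid.of (1 : Fin 2)).toList = [0, 1] := rfl
    have h2 : (FreeMonoid.of 0 * FreeMonoid.of (0 : Fin 2)).toList = [0, 0] := rfl
    rw [h1, h2]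
    exact List.Lex.cons (List.Lex.rel (by decide))
  · exact one_ne_zero
  · exact neg_ne_zero.2 one_ne_zero

lemma g_single (i : ℕ) : (X K : FreeAlg2 K) * Y K ^ i - X K * Y K ^ (i - 1) * X K =
    MonoidAlgebra.single
        (FreeMonoid.of 0 * FreeMonoid.of 1 ^ (i - 1) * FreeMonoid.of (0 : Fin 2)) (-1 : K)
      + MonoidAlgebra.single (FreeMonoid.of 0 * FreeMonoid.of (1 : Fin 2) ^ i) (1 : K) := by
  rw [X, Y, MonoidAlgebra.of_apply, MonoidAlgebra.of_apply, MonoidAlgebra.single_pow,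
    MonoidAlgebra.single_pow, MonoidAlgebra.single_mul_single, MonoidAlgebra.single_mul_single,
    MonoidAlgebra.single_mul_single, one_pow, mul_one, mul_one,
    sub_eq_add_neg, ← MonoidAlgebra.single_neg, add_comm]
  norm_num

lemma lead_g (i : ℕ) (hi : 1 ≤ i) :
    IsLeadingWord ((X K : FreeAlg2 K) * Y K ^ i - X K * Y K ^ (i - 1) * X K)
      (FreeMonoid.of 0 * FreeMonoid.of 1 ^ (i - 1) * FreeMonoid.of 0) := by
  obtain ⟨j, rfl⟩ := Nat.exists_eq_add_of_le hi
  have hij : 1 + j - 1 = j := by omega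
  rw [g_single, hij]
  apply leading_pair
  · intro h
    have := congrArg (fun w => (FreeMonoid.toList w).count (0 : Fin 2)) h
    simp [FreeMonoid.toList_mul, FreeMonoid.toList_of, toList_of_pow,
      List.count_append, List.count_replicate] at this
  · refine Or.inr ⟨?_, ?_⟩
    · simp [length_eq, FreeMonoid.toList_mul, FreeMonoid.toList_of, toList_of_pow]
      omega
    · have h1 : (FreeMonoid.of 0 * FreeMonoid.of (1 : Fin 2) ^ (1 + j)).toList
          = (0 :: List.replicate j 1) ++ [1] := by
        simp [FreeMonoid.toList_mul, FreeMonoid.toList_of, toList_of_pow, add_comm 1 j,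
          List.replicate_succ']
      have h2 : (FreeMonoid.of 0 * FreeMonoid.of (1 : Fin 2) ^ j * FreeMonoid.of 0).toList
          = (0 :: List.replicate j 1) ++ [0] := by
        simp [FreeMonoid.toList_mul, FreeMonoid.toList_of, toList_of_pow]
      rw [h1, h2]
      exact List.Lex.append_left r2 (List.Lex.rel (by decide)) _
  · exact neg_ne_zero.2 one_ne_zero
  · exact one_ne_zero

/-! ### The leading coefficient of an ideal element survives `piK` -/

lemma pi_lead {f : FreeAlg2 K} {wf : FreeMonoid (Fin 2)} (hwf : wf ∈ f.coeff.support)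
    (hmax : ∀ a ∈ f.coeff.support, a = wf ∨ WordLt2 a wf) (hfix : nfW wf = wf) :
    (piK K f).coeff wf = f.coeff wf := by
  classical
  show (Finsupp.mapDomain nfW f.coeff) wf = f.coeff wf
  rw [Finsupp.mapDomain, Finsupp.sum_apply, Finsupp.sum, Finset.sum_eq_single wf]
  · rw [hfix, Finsupp.single_eq_same]
  · intro a ha hnea
    apply Finsupp.single_eq_of_ne
    rcases hmax a ha with rfl | hlt
    · exact absurd rfl hnea
    · rcases nfW_le a with he | hl
      · rw [he]
        intro h
        exact wlt_irrefl wf (h ▸ hlt)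
      · intro h
        have h2 := wlt_trans hl hlt
        rw [← h] at h2
        exact wlt_irrefl wf h2
  · intro h
    exact absurd hwf h

lemma ofList_mul_decomp (u v : List (Fin 2)) (m : FreeMonoid (Fin 2)) :
    FreeMonoid.ofList (u ++ m.toList ++ v)
      = FreeMonoid.ofList u * m * FreeMonoid.ofList v := rfl

end Stmt10Aux

open Stmt10Aux in
/-- In the free associative algebra `K⟨x,y⟩` with degree-lexicographic order
(`x > y`), the set `{x² − xy} ∪ {xyⁱ − xy^{i−1}x : i ≥ 2}` is a Gröbner basis
of the two-sided ideal generated by `x² − xy`: it is contained in the ideal,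
and the leading word of every nonzero element of the ideal contains the
leading word of some element of the set as a subword. -/
theorem stmt_10 (K : Type*) [Field K] :
    letI x : FreeAlg2 K := MonoidAlgebra.of K (FreeMonoid (Fin 2)) (FreeMonoid.of 0)
    letI y : FreeAlg2 K := MonoidAlgebra.of K (FreeMonoid (Fin 2)) (FreeMonoid.of 1)
    letI G : Set (FreeAlg2 K) :=
      {x ^ 2 - x * y} ∪ {p | ∃ i : ℕ, 2 ≤ i ∧ p = x * y ^ i - x * y ^ (i - 1) * x}
    letI I := twoSidedSpan K {x ^ 2 - x * y}
    (∀ g ∈ G, g ∈ I) ∧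
    ∀ f ∈ I, f ≠ 0 → ∃ g ∈ G, ∃ wf wg : FreeMonoid (Fin 2),
      IsLeadingWord f wf ∧ IsLeadingWord g wg ∧ ∃ u v, wf = u * wg * v := by
  constructor
  · -- each element of `G` lies in the ideal
    intro g hg
    rcases hg with hg | ⟨i, hi, rfl⟩
    · rcases Set.mem_singleton_iff.1 hg with rfl
      exact Submodule.subset_span ⟨1, _, 1, rfl, by rw [one_mul, mul_one]⟩
    · exact gpoly_mem K i (by omega)
  · -- the Gröbner property
    intro f hf hf0
    have hne : f.coeff.support.Nonempty :=
      Finsupp.support_nonempty_iff.2 (mt MonoidAlgebra.coeff_eq_zero.1 hf0)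
    obtain ⟨wf, hwf, hmax⟩ := exists_max _ hne
    rcases nf_fix_or_split wf.toList with hfix | ⟨u, k, v, hsplit⟩
    · -- impossible: the leading word would survive `piK`, but `piK f = 0`
      exfalso
      have hker : piK K f = 0 := LinearMap.mem_ker.1 (Idl_le_ker K hf)
      have hfixW : nfW wf = wf := by
        rw [nfW, hfix, FreeMonoid.ofList_toList]
      have := pi_lead K hwf hmax hfixW
      rw [hker] at this
      exact Finsupp.mem_support_iff.1 hwf this.symm
    · -- the leading word contains `x yᵏ x`
      rcases k with _ | k'
      · -- contains `x x` : use the generator `x² - xy`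
        refine ⟨_, Or.inl rfl, wf, FreeMonoid.of 0 * FreeMonoid.of 0, ⟨hwf, hmax⟩,
          lead_S K, FreeMonoid.ofList u, FreeMonoid.ofList v, ?_⟩
        rw [← ofList_mul_decomp, ← FreeMonoid.ofList_toList wf, hsplit]
        congr 1
        simp [FreeMonoid.toList_mul, FreeMonoid.toList_of]
      · -- contains `x y^(k'+1) x` : use the generator with `i = k' + 2`
        refine ⟨_, Or.inr ⟨k' + 2, by omega, rfl⟩, wf,
          FreeMonoid.of 0 * FreeMonoid.of 1 ^ (k' + 2 - 1) * FreeMonoid.of 0,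
          ⟨hwf, hmax⟩, lead_g K (k' + 2) (by omega),
          FreeMonoid.ofList u, FreeMonoid.ofList v, ?_⟩
        rw [← ofList_mul_decomp, ← FreeMonoid.ofList_toList wf, hsplit]
        congr 1
        have : (k' + 2 - 1) = k' + 1 := by omega
        rw [this]
        simp [FreeMonoid.toList_mul, FreeMonoid.toList_of, toList_of_pow]
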